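/- Let L be a non-empty regular language with quotient DFA D and átomaton A. The map φ that assigns to each atom the set of its uncomplemented quotients is an NFA isomorphism between the átomaton A and D^{R D R} (the quotient DFA reversed, determinized, and reversed again): φ is a bijection between the state sets mapping initial states onto initial states, final states onto final states, and commuting with the transition functions. -/

import Mathlib

/-! Basic definitions: left quotients, atoms, and operations on finite automata. -/

/-- The left quotient of a language `L` by a word `w`: `w⁻¹L = {x | w ++ x ∈ L}`. -/
def leftQuot {α : Type} (L : Language α) (w : List α) : Language α := {x | w ++ x ∈ L}

/-- The set of all left quotients of `L`. -/
def quots {α : Type} (L : Language α) : Set (Language α) := {K | ∃ w : List α, K = leftQuot L w}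

/-- `A` is an atom of `L`: a non-empty intersection `K̃_0 ∩ ⋯ ∩ K̃_{n−1}` where each `K̃_i` is a
quotient `K_i` of `L` or its complement (`S` is the set of uncomplemented quotients, so a word is
in the intersection iff it belongs exactly to the quotients in `S`). -/
def IsAtomOf {α : Type} (L A : Language α) : Prop :=
  (∃ x, x ∈ A) ∧ ∃ S : Set (Language α), S ⊆ quots L ∧
    A = {x | ∀ K ∈ quots L, (x ∈ K ↔ K ∈ S)}

/-- A positive atom: at least one term of its defining intersection is uncomplemented,
equivalently the atom is contained in some quotient of `L`. -/
def IsPositiveAtomOf {α : Type} (L A : Language α) : Prop :=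
  IsAtomOf L A ∧ ∃ K ∈ quots L, ∀ x ∈ A, x ∈ K

namespace NFA

/-- The right language of a state `q`: words accepted starting from `q`. -/
def rightLang {α σ : Type} (M : NFA α σ) (q : σ) : Language α :=
  {w | ∃ p ∈ M.accept, p ∈ M.evalFrom {q} w}

/-- The left language of a state `q`: words leading from the initial states to `q`. -/
def leftLang {α σ : Type} (M : NFA α σ) (q : σ) : Language α :=
  {w | q ∈ M.eval w}

/-- An NFA is trim if every state has a non-empty left language and right language. -/
def IsTrim {α σ : Type} (M : NFA α σ) : Prop :=
  ∀ q, (∃ w, w ∈ M.leftLang q) ∧ (∃ w, w ∈ M.rightLang q)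

/-- An NFA is reduced if distinct states have distinct right languages. -/
def IsReduced {α σ : Type} (M : NFA α σ) : Prop :=
  ∀ q p, M.rightLang q = M.rightLang p → q = p

/-- An NFA is atomic if the right language of every state is a union of positive atoms of the
accepted language. -/
def IsAtomic {α σ : Type} (M : NFA α σ) : Prop :=
  ∀ q, ∃ 𝒜 : Set (Language α), (∀ A ∈ 𝒜, IsPositiveAtomOf M.accepts A) ∧
    M.rightLang q = {w | ∃ A ∈ 𝒜, w ∈ A}

/-- Reversal of an NFA: interchange initial and final states and reverse all transitions. -/
def rev {α σ : Type} (M : NFA α σ) : NFA α σ :=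
  ⟨fun q a => {p | q ∈ M.step p a}, M.accept, M.start⟩

/-- States of the determinization of an NFA: the subsets of states reachable from the initial
subset. -/
def detStates {α σ : Type} (M : NFA α σ) : Type := {S : Set σ // ∃ w, M.eval w = S}

instance {α σ : Type} [Finite σ] (M : NFA α σ) : Finite M.detStates :=
  Subtype.finite

/-- Determinization of an NFA by the subset construction, keeping only the subsets reachable
from the initial subset. -/
def det {α σ : Type} (M : NFA α σ) : DFA α M.detStates where
  step S a := ⟨M.stepSet S.1 a, by
    obtain ⟨w, hw⟩ := S.2
    exact ⟨w ++ [a], by rw [NFA.eval_append_singleton, hw]⟩⟩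
  start := ⟨M.start, [], rfl⟩
  accept := {S | ∃ p ∈ M.accept, p ∈ S.1}

end NFA

/-- Reversal of a DFA, yielding an NFA. -/
def DFA.rev {α σ : Type} (M : DFA α σ) : NFA α σ :=
  ⟨fun q a => {p | M.step p a = q}, M.accept, {M.start}⟩

/-- A DFA is minimal if no DFA accepting the same language has fewer states. -/
def DFA.IsMinimal {α σ : Type} (M : DFA α σ) : Prop :=
  ∀ (σ' : Type) (_ : Finite σ') (M' : DFA α σ'), M'.accepts = M.accepts →
    Nat.card σ ≤ Nat.card σ'

/-- The átomaton of `L`: states are the atoms of `L`, the initial states are the initial atoms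
(those contained in `L`, i.e., with `L` occurring uncomplemented among their terms), the final
states are the atoms containing `ε` (there is exactly one such atom when `L ≠ ∅`), and the atom
`B` is an `a`-successor of the atom `A` iff `a·B ⊆ A`. -/
def atomaton {α : Type} (L : Language α) : NFA α {A : Language α // IsAtomOf L A} where
  step A a := {B | ∀ w ∈ B.1, a :: w ∈ A.1}
  start := {A | ∀ x ∈ A.1, x ∈ L}
  accept := {A | [] ∈ A.1}

theorem leftQuot_leftQuot {α : Type} (L : Language α) (w v : List α) :
    leftQuot (leftQuot L w) v = leftQuot L (w ++ v) :=
  Set.ext fun x => by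
    show w ++ (v ++ x) ∈ L ↔ (w ++ v) ++ x ∈ L
    rw [List.append_assoc]

theorem leftQuot_nil {α : Type} (L : Language α) : leftQuot L [] = L :=
  Set.ext fun _ => Iff.rfl

/-- The quotient DFA of `L`: states are the left quotients of `L`, the initial state is `L`
itself, the final states are the quotients containing `ε`, and `δ(K, a) = a⁻¹K`. -/
def quotDFA {α : Type} (L : Language α) : DFA α {K : Language α // K ∈ quots L} where
  step K a := ⟨leftQuot K.1 [a], by
    obtain ⟨w, hw⟩ := K.2
    exact ⟨w ++ [a], by rw [hw, leftQuot_leftQuot]⟩⟩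
  start := ⟨L, [], (leftQuot_nil L).symm⟩
  accept := {K | [] ∈ K.1}

/-!
Two words are equivalent when they lie in exactly the same quotients of `L`; the atoms are the
equivalence classes, and the set of quotients containing a word `x` is the state that `D^{R D}`
reaches on `x.reverse`. Hence `φ` is well defined and bijective. Since `a⁻¹K` is again a
quotient, the class of `a :: x` depends only on the class of `x`, and a transition of `D^{R D}`
sends the quotients containing `x` to the quotients containing `a :: x`; read backwards, this is
exactly the condition `a·B ⊆ A` of the átomaton.
-/

section

variable {α : Type} {L : Language α}

def quotsContaining (L : Language α) (x : List α) : Set {K : Language α // K ∈ quots L} :=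
  {K | x ∈ K.1}

lemma leftQuot_mem_quots {K : Language α} (hK : K ∈ quots L) (w : List α) :
    leftQuot K w ∈ quots L := by
  obtain ⟨u, rfl⟩ := hK
  exact ⟨u ++ w, leftQuot_leftQuot L u w⟩

lemma quotsContaining_cons_congr {x y : List α} (h : quotsContaining L x = quotsContaining L y)
    (a : α) : quotsContaining L (a :: x) = quotsContaining L (a :: y) := by
  ext K
  exact Set.ext_iff.mp h ⟨leftQuot K.1 [a], leftQuot_mem_quots K.2 [a]⟩

lemma isAtomOf_quotsContaining_eq (L : Language α) (x : List α) :
    IsAtomOf L {y | quotsContaining L y = quotsContaining L x} := by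
  refine ⟨⟨x, rfl⟩, {K | K ∈ quots L ∧ x ∈ K}, fun K hK => hK.1, ?_⟩
  ext y
  simp only [Set.mem_ofPred_eq, Set.ext_iff, quotsContaining, Subtype.forall]
  exact forall₂_congr fun K hK => by simp [hK]

lemma IsAtomOf.eq_quotsContaining_eq {A : Language α} (hA : IsAtomOf L A) {x : List α}
    (hx : x ∈ A) : A = {y | quotsContaining L y = quotsContaining L x} := by
  obtain ⟨-, S, -, rfl⟩ := hA
  ext y
  simp only [Set.mem_ofPred_eq, Set.ext_iff, quotsContaining, Subtype.forall] at hx ⊢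
  exact forall₂_congr fun K hK => by rw [hx K hK]

lemma IsAtomOf.quotsContaining_eq_iff {A : Language α} (hA : IsAtomOf L A) {x y : List α}
    (hx : x ∈ A) : quotsContaining L y = quotsContaining L x ↔ y ∈ A := by
  rw [hA.eq_quotsContaining_eq hx]
  rfl

lemma IsAtomOf.setOf_forall_mem_eq {A : Language α} (hA : IsAtomOf L A) {x : List α}
    (hx : x ∈ A) :
    {K : {K : Language α // K ∈ quots L} | ∀ y ∈ A, y ∈ K.1} = quotsContaining L x := by
  ext K
  refine ⟨fun hK => hK x hx, fun hK y hy => ?_⟩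
  rw [← (hA.quotsContaining_eq_iff hx).mpr hy] at hK
  exact hK

lemma atomaton_step_iff {A B : {A : Language α // IsAtomOf L A}} {y : List α} (hy : y ∈ B.1)
    (a : α) : B ∈ (atomaton L).step A a ↔ a :: y ∈ A.1 := by
  refine ⟨fun h => h y hy, fun h w hw => (A.2.quotsContaining_eq_iff h).mp ?_⟩
  exact quotsContaining_cons_congr ((B.2.quotsContaining_eq_iff hy).mpr hw) a

lemma quotDFA_rev_stepSet (x : List α) (a : α) :
    (quotDFA L).rev.stepSet (quotsContaining L x) a = quotsContaining L (a :: x) := by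
  ext K
  rw [NFA.mem_stepSet]
  exact ⟨by rintro ⟨_, hx, rfl⟩; exact hx, fun h => ⟨_, h, rfl⟩⟩

lemma quotDFA_rev_eval (w : List α) :
    (quotDFA L).rev.eval w = quotsContaining L w.reverse := by
  induction w using List.reverseRec with
  | nil => rfl
  | append_singleton w a ih =>
    rw [NFA.eval_append_singleton, ih, quotDFA_rev_stepSet, List.reverse_append]
    rfl

def atomToDetState (A : {A : Language α // IsAtomOf L A}) : (quotDFA L).rev.detStates :=
  ⟨{K | ∀ x ∈ A.1, x ∈ K.1}, by
    obtain ⟨⟨x, hx⟩, -⟩ := A.2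
    exact ⟨x.reverse, by rw [quotDFA_rev_eval, List.reverse_reverse, A.2.setOf_forall_mem_eq hx]⟩⟩

lemma atomToDetState_val {A : {A : Language α // IsAtomOf L A}} {x : List α} (hx : x ∈ A.1) :
    (atomToDetState A).1 = quotsContaining L x :=
  A.2.setOf_forall_mem_eq hx

lemma atomToDetState_eq_iff {A : {A : Language α // IsAtomOf L A}} {x y : List α} (hx : x ∈ A.1)
    {S : (quotDFA L).rev.detStates} (hS : S.1 = quotsContaining L y) :
    atomToDetState A = S ↔ y ∈ A.1 := by
  refine Subtype.ext_iff.trans ?_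
  rw [hS, atomToDetState_val hx, eq_comm]
  exact A.2.quotsContaining_eq_iff hx

lemma det_step_atomToDetState_val {B : {A : Language α // IsAtomOf L A}} {y : List α}
    (hy : y ∈ B.1) (a : α) :
    ((quotDFA L).rev.det.step (atomToDetState B) a).1 = quotsContaining L (a :: y) := by
  rw [← quotDFA_rev_stepSet, ← atomToDetState_val hy]
  rfl

lemma atomToDetState_bijective : Function.Bijective (atomToDetState (L := L)) := by
  refine ⟨fun A B hAB => ?_, fun ⟨S, w, hw⟩ => ?_⟩
  · obtain ⟨x, hx⟩ := A.2.1
    obtain ⟨y, hy⟩ := B.2.1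
    have hyA : y ∈ A.1 := (atomToDetState_eq_iff hx (atomToDetState_val hy)).mp hAB
    rw [Subtype.ext_iff, A.2.eq_quotsContaining_eq hyA, B.2.eq_quotsContaining_eq hy]
  · rw [quotDFA_rev_eval] at hw
    let A : {A : Language α // IsAtomOf L A} := ⟨_, isAtomOf_quotsContaining_eq L w.reverse⟩
    exact ⟨A, (atomToDetState_eq_iff (A := A) rfl hw.symm).mpr rfl⟩

end

theorem atomaton_iso_detrev_general {α : Type} {L : Language α} :
    ∃ e : {A : Language α // IsAtomOf L A} ≃ (quotDFA L).rev.detStates,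
      (∀ A, (e A).1 = {K : {K : Language α // K ∈ quots L} | ∀ x ∈ A.1, x ∈ K.1}) ∧
      (∀ A, A ∈ (atomaton L).start ↔ e A ∈ (quotDFA L).rev.det.rev.start) ∧
      (∀ A, A ∈ (atomaton L).accept ↔ e A ∈ (quotDFA L).rev.det.rev.accept) ∧
      (∀ A B a, B ∈ (atomaton L).step A a ↔ e B ∈ (quotDFA L).rev.det.rev.step (e A) a) := by
  refine ⟨Equiv.ofBijective _ atomToDetState_bijective, fun A => rfl, fun A => ?_, fun A => ?_,
    fun A B a => ?_⟩
  -- the initial states of `D^{RDR}` are the states of `D^{RD}` containing the quotient `L`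
  · exact ⟨fun h => ⟨_, rfl, h⟩, by rintro ⟨_, rfl, h⟩; exact h⟩
  -- its final state is the initial state of `D^{RD}`, the set of quotients containing `ε`
  · obtain ⟨x, hx⟩ := A.2.1
    exact (atomToDetState_eq_iff hx (S := (quotDFA L).rev.det.start) rfl).symm
  · obtain ⟨x, hx⟩ := A.2.1
    obtain ⟨y, hy⟩ := B.2.1
    rw [atomaton_step_iff hy]
    exact (eq_comm.trans (atomToDetState_eq_iff hx (det_step_atomToDetState_val hy a))).symm

/-- The map `φ` assigning to each atom the set of quotients occurring
uncomplemented in it is an NFA isomorphism between the átomaton and `D^{R D R}` (the quotient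
DFA reversed, determinized, and reversed again): a bijection of the state sets mapping initial
states onto initial states, final states onto final states, and commuting with the transition
functions. -/
theorem atomaton_iso_detrev {α : Type} [Finite α] {L : Language α} (hL : L.IsRegular)
    (hne : ∃ w, w ∈ L) :
    ∃ e : {A : Language α // IsAtomOf L A} ≃ (quotDFA L).rev.detStates,
      (∀ A, (e A).1 = {K : {K : Language α // K ∈ quots L} | ∀ x ∈ A.1, x ∈ K.1}) ∧
      (∀ A, A ∈ (atomaton L).start ↔ e A ∈ (quotDFA L).rev.det.rev.start) ∧
      (∀ A, A ∈ (atomaton L).accept ↔ e A ∈ (quotDFA L).rev.det.rev.accept) ∧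
      (∀ A B a, B ∈ (atomaton L).step A a ↔ e B ∈ (quotDFA L).rev.det.rev.step (e A) a) :=
  atomaton_iso_detrev_general
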